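/- arXiv:1407.5174 — 8 statements merged into one kernel-verified Lean document; each statement's English description precedes it below -/
import Mathlib

section
/- Let n be odd and μ ≥ 2. There does not exist a collection of μ transversals of B_n intersecting stably in t points for any t with n − μ + 1 ≤ t ≤ n − 1. -/
def IsTransversal (n : ℕ) (T : Set (ZMod n × ZMod n × ZMod n)) : Prop :=
  (∀ x ∈ T, x.2.2 = x.1 + x.2.1) ∧
  (∀ r : ZMod n, ∃! x : ZMod n × ZMod n × ZMod n, x ∈ T ∧ x.1 = r) ∧
  (∀ c : ZMod n, ∃! x : ZMod n × ZMod n × ZMod n, x ∈ T ∧ x.2.1 = c) ∧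
  (∀ s : ZMod n, ∃! x : ZMod n × ZMod n × ZMod n, x ∈ T ∧ x.2.2 = s)

def StablyIntersect (n μ : ℕ) (T : Fin μ → Set (ZMod n × ZMod n × ZMod n)) (t : ℕ) : Prop :=
  ∃ S : Set (ZMod n × ZMod n × ZMod n), S.ncard = t ∧ S = ⋂ i, T i ∧
    ∀ i j : Fin μ, i < j → T i ∩ T j = S

theorem no_stable_near_full (n μ t : ℕ) (hn : Odd n) (hμ : 2 ≤ μ)
    (h1 : n - μ + 1 ≤ t) (h2 : t ≤ n - 1) :
    ¬ ∃ T : Fin μ → Set (ZMod n × ZMod n × ZMod n),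
      (∀ α, IsTransversal n (T α)) ∧ StablyIntersect n μ T t := by
  rintro ⟨T, hT, S, hScard, hSeq, hSint⟩
  have hn0 : n ≠ 0 := hn.pos.ne'
  haveI : NeZero n := ⟨hn0⟩
  have hcardZ : Nat.card (ZMod n) = n := by
    rw [Nat.card_eq_fintype_card, ZMod.card]
  have hSsub : ∀ i, S ⊆ T i := by
    intro i; rw [hSeq]; exact Set.iInter_subset _ i
  set i0 : Fin μ := ⟨0, by omega⟩ with hi0
  have htn : t < n := by omega
  -- rows of S are injective
  have hrowInj : Set.InjOn Prod.fst S := by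
    intro a ha b hb hab
    exact ((hT i0).2.1 a.1).unique ⟨hSsub i0 ha, rfl⟩ ⟨hSsub i0 hb, hab.symm⟩
  have hcolInj : Set.InjOn (fun p : ZMod n × ZMod n × ZMod n => p.2.1) S := by
    intro a ha b hb hab
    exact ((hT i0).2.2.1 a.2.1).unique ⟨hSsub i0 ha, rfl⟩ ⟨hSsub i0 hb, hab.symm⟩
  have hrowsCard : (Prod.fst '' S).ncard = t := by
    rw [Set.ncard_image_of_injOn hrowInj, hScard]
  -- find a row not covered by S
  have : ∃ r : ZMod n, r ∉ Prod.fst '' S := by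
    by_contra h
    push_neg at h
    have : Prod.fst '' S = Set.univ := Set.eq_univ_of_forall h
    rw [this, Set.ncard_univ, hcardZ] at hrowsCard
    omega
  obtain ⟨r, hr⟩ := this
  -- the cell of T i in row r
  choose x hx1 hx2 using fun i : Fin μ => ((hT i).2.1 r).exists
  -- columns of the x i are pairwise distinct
  have hxeq : ∀ i j : Fin μ, (x i).2.1 = (x j).2.1 → x i = x j := by
    intro i j hc
    have h1 := (hT i).1 _ (hx1 i)
    have h2 := (hT j).1 _ (hx1 j)
    have : (x i).2.2 = (x j).2.2 := by rw [h1, h2, hx2 i, hx2 j, hc]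
    exact Prod.ext ((hx2 i).trans (hx2 j).symm) (Prod.ext hc this)
  have hinj : Function.Injective fun i : Fin μ => (x i).2.1 := by
    intro i j hc
    by_contra hij
    have hxx : x i = x j := hxeq i j hc
    have hmem : x i ∈ S := by
      rcases lt_or_gt_of_ne hij with h | h
      · rw [← hSint i j h]; exact ⟨hx1 i, hxx ▸ hx1 j⟩
      · rw [← hSint j i h]; exact ⟨hxx ▸ hx1 j, hx1 i⟩
    exact hr ⟨x i, hmem, hx2 i⟩
  -- columns of the x i avoid columns of S
  have havoid : ∀ i : Fin μ,
      (x i).2.1 ∉ (fun p : ZMod n × ZMod n × ZMod n => p.2.1) '' S := by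
    rintro i ⟨s, hsS, hcol⟩
    have : s = x i := ((hT i).2.2.1 (x i).2.1).unique ⟨hSsub i hsS, hcol⟩ ⟨hx1 i, rfl⟩
    exact hr ⟨s, hsS, by rw [this, hx2 i]⟩
  -- counting
  have hcolsCard : ((fun p : ZMod n × ZMod n × ZMod n => p.2.1) '' S).ncard = t := by
    rw [Set.ncard_image_of_injOn hcolInj, hScard]
  have hcompl : ((fun p : ZMod n × ZMod n × ZMod n => p.2.1) '' S)ᶜ.ncard = n - t := by
    have := Set.ncard_add_ncard_compl ((fun p : ZMod n × ZMod n × ZMod n => p.2.1) '' S)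
    rw [hcolsCard, hcardZ] at this
    omega
  have hsub : Set.range (fun i : Fin μ => (x i).2.1) ⊆
      ((fun p : ZMod n × ZMod n × ZMod n => p.2.1) '' S)ᶜ := by
    rintro c ⟨i, rfl⟩
    exact havoid i
  have hrange : (Set.range fun i : Fin μ => (x i).2.1).ncard = μ := by
    rw [← Set.image_univ, Set.ncard_image_of_injective _ hinj, Set.ncard_univ,
      Nat.card_eq_fintype_card, Fintype.card_fin]
  have hle : μ ≤ n - t := by
    rw [← hrange, ← hcompl]
    exact Set.ncard_le_ncard hsub (Set.toFinite _)
  omega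
end

section
/- Let j, a, b be positive integers with 1 ≤ a < b. Then the j-fold sumset j·([0,a] ∪ {b}) = { a₁ + ⋯ + a_j : each a_i ∈ [0,a] ∪ {b} } equals [0, jb] \ ⋃_{i=1}^{⌊(b−2)/a⌋} [jb − ib + ia + 1, jb − ib + b − 1]. -/
lemma mem_sumset_succ (S : Set ℤ) (j : ℕ) (x : ℤ) :
    (∃ f : Fin (j+1) → ℤ, (∀ i, f i ∈ S) ∧ x = ∑ i, f i) ↔
    ∃ t ∈ S, ∃ y, (∃ f : Fin j → ℤ, (∀ i, f i ∈ S) ∧ y = ∑ i, f i) ∧ x = y + t := by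
  constructor
  · rintro ⟨f, hf, rfl⟩
    refine ⟨f 0, hf 0, ∑ i : Fin j, f i.succ, ⟨fun i => f i.succ, fun i => hf _, rfl⟩, ?_⟩
    rw [Fin.sum_univ_succ]; ring
  · rintro ⟨t, ht, y, ⟨f, hf, rfl⟩, rfl⟩
    refine ⟨Fin.cons t f, ?_, ?_⟩
    · intro i
      refine Fin.cases ?_ ?_ i
      · simpa using ht
      · intro k; simpa using hf k
    · rw [Fin.sum_univ_succ]; simp [add_comm]

lemma char (a b : ℤ) (ha : 1 ≤ a) (hab : a < b) : ∀ (j : ℕ) (x : ℤ),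
    (∃ f : Fin j → ℤ, (∀ i, f i ∈ Set.Icc 0 a ∪ {b}) ∧ x = ∑ i, f i) ↔
    ∃ k : ℤ, 0 ≤ k ∧ k ≤ (j : ℤ) ∧ k * b ≤ x ∧ x ≤ k * b + ((j : ℤ) - k) * a := by
  intro j
  induction j with
  | zero =>
    intro x
    constructor
    · rintro ⟨f, hf, rfl⟩
      exact ⟨0, le_refl 0, by simp, by simp, by simp⟩
    · rintro ⟨k, hk0, hk1, hk2, hk3⟩
      have : k = 0 := le_antisymm (by exact_mod_cast hk1) hk0
      subst this
      refine ⟨fun i => 0, by simp, ?_⟩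
      simp at hk2 hk3 ⊢
      omega
  | succ n ih =>
    intro x
    rw [mem_sumset_succ]
    constructor
    · rintro ⟨t, ht, y, hy, rfl⟩
      obtain ⟨k, hk0, hk1, hk2, hk3⟩ := (ih y).1 hy
      rcases ht with ht | ht
      · obtain ⟨ht0, hta⟩ := ht
        refine ⟨k, hk0, by push_cast; linarith, by linarith, ?_⟩
        push_cast
        nlinarith
      · simp only [Set.mem_singleton_iff] at ht
        subst ht
        refine ⟨k + 1, by linarith, by push_cast; linarith, by linarith, ?_⟩
        push_cast
        nlinarith
    · rintro ⟨k, hk0, hk1, hk2, hk3⟩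
      by_cases hk : k = 0
      · subst hk
        simp only [zero_mul, zero_add, zero_sub] at hk2 hk3
        refine ⟨min a x, Or.inl ⟨le_min (by linarith) hk2, min_le_left _ _⟩, x - min a x, ?_, by ring⟩
        refine (ih (x - min a x)).2 ⟨0, le_refl 0, Nat.cast_nonneg n, by simp [min_le_right], ?_⟩
        push_cast at hk3
        rcases min_cases a x with ⟨h1, h2⟩ | ⟨h1, h2⟩ <;> simp [h1] <;> nlinarith [Nat.cast_nonneg (α := ℤ) n]
      · -- k ≥ 1, take t = b
        refine ⟨b, Or.inr rfl, x - b, ?_, by ring⟩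
        refine (ih (x - b)).2 ⟨k - 1, by omega, ?_, by nlinarith, ?_⟩
        · push_cast at hk1; linarith
        · push_cast at hk3 ⊢
          nlinarith

theorem sumset_interval (j : ℕ) (a b : ℤ) (hj : 1 ≤ j) (ha : 1 ≤ a) (hab : a < b) :
    {s : ℤ | ∃ f : Fin j → ℤ, (∀ i, f i ∈ Set.Icc 0 a ∪ {b}) ∧ s = ∑ i, f i}
      = Set.Icc 0 ((j : ℤ) * b) \
        (⋃ i ∈ Set.Icc (1 : ℤ) ((b - 2) / a),
          Set.Icc ((j : ℤ) * b - i * b + i * a + 1) ((j : ℤ) * b - i * b + b - 1)) := by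
  have hb : (0:ℤ) < b := by linarith
  have ha0 : (0:ℤ) < a := by linarith
  ext x
  simp only [Set.mem_setOf_eq, char a b ha hab j x, Set.mem_diff, Set.mem_Icc]
  constructor
  · rintro ⟨k, hk0, hk1, hk2, hk3⟩
    refine ⟨⟨by nlinarith, by nlinarith [mul_le_mul_of_nonneg_left hab.le (by linarith : (0:ℤ) ≤ (j:ℤ) - k)]⟩, ?_⟩
    intro H
    rw [Set.mem_iUnion₂] at H
    obtain ⟨i, hi, hx1, hx2⟩ := H
    obtain ⟨hi1, hi2⟩ := Set.mem_Icc.1 hi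
    have hia : i * a ≤ b - 2 := (Int.le_ediv_iff_mul_le ha0).1 hi2
    by_cases hij : i ≤ (j:ℤ)
    · by_cases hk : k ≤ (j:ℤ) - i
      · nlinarith [mul_le_mul_of_nonneg_left hab.le (by linarith : (0:ℤ) ≤ (j:ℤ) - i - k)]
      · nlinarith [mul_le_mul_of_nonneg_right (by linarith : (j:ℤ) - i + 1 ≤ k) hb.le]
    · nlinarith [mul_nonneg (by linarith : (0:ℤ) ≤ i - (j:ℤ) - 1) hb.le]
  · rintro ⟨⟨hx0, hxj⟩, hgap⟩
    rw [Set.mem_iUnion₂] at hgap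
    push_neg at hgap
    set c := x / b with hc
    have hc0 : 0 ≤ c := Int.ediv_nonneg hx0 hb.le
    have hcb : c * b ≤ x := Int.ediv_mul_le x hb.ne'
    have hcb2 : x < (c + 1) * b := Int.lt_ediv_add_one_mul_self x hb
    by_cases hcj : (j:ℤ) ≤ c
    · refine ⟨j, Nat.cast_nonneg j, le_refl _, ?_, ?_⟩
      · nlinarith
      · simp; linarith
    · refine ⟨c, hc0, by linarith, hcb, ?_⟩
      by_contra h
      push_neg at h
      set i := (j:ℤ) - c with hi
      have hia : i * a ≤ b - 2 := by nlinarith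
      have := hgap i (Set.mem_Icc.2 ⟨by omega, (Int.le_ediv_iff_mul_le ha0).2 hia⟩)
      rw [Set.mem_Icc] at this
      push_neg at this
      rcases le_or_gt ((j:ℤ) * b - i * b + i * a + 1) x with h1 | h1
      · have := this h1
        nlinarith
      · nlinarith
end

section
/- Let j, a, b be positive integers with 1 ≤ a < b. Then j·([0,a] ∪ {b}) = ⋃_{i=0}^{j} [ib, ib + (j−i)a], where kA denotes the k-fold sumset of A. -/
lemma clamp_sum (a : ℤ) (ha : 0 ≤ a) : ∀ (n : ℕ) (r : ℤ), 0 ≤ r → r ≤ n * a →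
    ∑ m ∈ Finset.range n, min a (max 0 (r - m * a)) = r := by
  intro n
  induction n with
  | zero => intro r hr hra; simp at hra ⊢; omega
  | succ n ih =>
    intro r hr hra
    rw [Finset.sum_range_succ'] at *
    rcases le_or_gt a r with h | h
    · have key : ∀ m : ℕ, min a (max 0 (r - (m + 1 : ℕ) * a)) = min a (max 0 ((r - a) - m * a)) := by
        intro m; push_cast; ring_nf
      simp only [key]
      rw [ih (r - a) (by omega) (by push_cast at hra ⊢; linarith)]
      have : min a (max 0 (r - (0:ℕ) * a)) = a := by
        have h0 : r - ((0:ℕ):ℤ) * a = r := by push_cast; ring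
        rw [h0, min_eq_left (le_max_of_le_right h)]
      rw [this]; ring
    · have key : ∀ m : ℕ, min a (max 0 (r - (m + 1 : ℕ) * a)) = 0 := by
        intro m
        have : r - ((m:ℤ) + 1) * a ≤ 0 := by nlinarith [Int.ofNat_nonneg m]
        push_cast
        rw [max_eq_left (by linarith), min_eq_right ha]
      simp only [key, Finset.sum_const, smul_zero, zero_add]
      simp; omega

theorem sumset_union_of_intervals (j : ℕ) (a b : ℤ) (hj : 1 ≤ j) (ha : 1 ≤ a) (hab : a < b) :
    {s : ℤ | ∃ f : Fin j → ℤ, (∀ i, f i ∈ Set.Icc 0 a ∪ {b}) ∧ s = ∑ i, f i}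
      = ⋃ i ∈ Set.Icc (0 : ℤ) (j : ℤ), Set.Icc (i * b) (i * b + ((j : ℤ) - i) * a) := by
  ext s
  simp only [Set.mem_setOf_eq, Set.mem_iUnion, Set.mem_Icc, exists_prop]
  constructor
  · rintro ⟨f, hf, rfl⟩
    classical
    set T := Finset.univ.filter (fun k : Fin j => f k = b) with hT
    refine ⟨(T.card : ℤ), ⟨by positivity, ?_⟩, ?_, ?_⟩
    · exact_mod_cast (Finset.card_le_card (Finset.subset_univ T)).trans_eq (by simp)
    all_goals {
      have hsplit : ∑ i, f i = ∑ k ∈ T, f k + ∑ k ∈ Finset.univ.filter (fun k => ¬ f k = b), f k :=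
        (Finset.sum_filter_add_sum_filter_not _ _ _).symm
      have hT1 : ∑ k ∈ T, f k = (T.card : ℤ) * b := by
        rw [Finset.sum_congr rfl (fun k hk => (Finset.mem_filter.mp hk).2), Finset.sum_const,
          nsmul_eq_mul]
      have hcard : T.card + (Finset.univ.filter (fun k => ¬ f k = b)).card = j := by
        rw [Finset.card_filter_add_card_filter_not]; simp
      have hmem : ∀ k ∈ Finset.univ.filter (fun k : Fin j => ¬ f k = b), f k ∈ Set.Icc 0 a := by
        intro k hk
        rcases hf k with h | h
        · exact h
        · exact absurd h (Finset.mem_filter.mp hk).2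
      first
      | · have h1 : (0:ℤ) ≤ ∑ k ∈ Finset.univ.filter (fun k => ¬ f k = b), f k :=
            Finset.sum_nonneg fun k hk => (hmem k hk).1
          rw [hsplit, hT1]; linarith
      | · have h2 : ∑ k ∈ Finset.univ.filter (fun k => ¬ f k = b), f k ≤
            ((Finset.univ.filter (fun k : Fin j => ¬ f k = b)).card : ℤ) * a := by
            calc _ ≤ (Finset.univ.filter (fun k : Fin j => ¬ f k = b)).card • a :=
                  Finset.sum_le_card_nsmul _ _ _ fun k hk => (hmem k hk).2
              _ = _ := nsmul_eq_mul _ _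
          rw [hsplit, hT1]
          have : ((Finset.univ.filter (fun k : Fin j => ¬ f k = b)).card : ℤ)
              = (j : ℤ) - T.card := by
            have := hcard; push_cast; omega
          rw [this] at h2; linarith
    }
  · rintro ⟨i, ⟨hi0, hij⟩, hs1, hs2⟩
    set n := i.toNat with hn
    have hni : (n : ℤ) = i := Int.toNat_of_nonneg hi0
    have hnj : n ≤ j := by omega
    set m := j - n with hm
    have hjm : j = n + m := by omega
    set r := s - i * b with hr
    have hr0 : 0 ≤ r := by omega
    have hrm : r ≤ (m : ℤ) * a := by
      have : ((m : ℤ)) = (j : ℤ) - i := by omega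
      rw [this]; omega
    refine ⟨fun k => if (k : ℕ) < n then b else min a (max 0 (r - ((k : ℕ) - n : ℕ) * a)),
      fun k => ?_, ?_⟩
    · by_cases h : (k : ℕ) < n
      · simp [h]
      · simp only [h, if_false]
        left
        constructor
        · exact le_min (by omega) (le_max_left _ _)
        · exact min_le_left _ _
    · rw [Fin.sum_univ_eq_sum_range (fun k => if k < n then b
        else min a (max 0 (r - ((k : ℕ) - n : ℕ) * a)))]
      rw [hjm, Finset.sum_range_add]
      have h1 : ∑ k ∈ Finset.range n, (if k < n then b
          else min a (max 0 (r - ((k : ℕ) - n : ℕ) * a))) = (n : ℤ) * b := by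
        rw [Finset.sum_congr rfl (fun k hk => if_pos (Finset.mem_range.mp hk)),
          Finset.sum_const, Finset.card_range, nsmul_eq_mul]
      have h2 : ∑ k ∈ Finset.range m, (if n + k < n then b
          else min a (max 0 (r - ((n + k : ℕ) - n : ℕ) * a))) = r := by
        have : ∀ k ∈ Finset.range m, (if n + k < n then b
            else min a (max 0 (r - ((n + k : ℕ) - n : ℕ) * a)))
            = min a (max 0 (r - k * a)) := by
          intro k _
          rw [if_neg (by omega)]
          have hk : (n + k) - n = k := by omega
          rw [hk]
        rw [Finset.sum_congr rfl this, clamp_sum a (by omega) m r hr0 hrm]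
      rw [h1, h2, hni]
      omega
end

section
/- Suppose T_1, …, T_μ are transversals of B_n intersecting stably in t points with common set S. For each α define the partial Latin square Q_α = {(i, c + i mod n, r + c + i mod n) : i ∈ Z_n, (r, c, r+c) ∈ T_α \ S}. Then each row of Q_α and the corresponding row of Q_β contain the same set of symbols, each column of Q_α and Q_β contain the same set of symbols, the Q_α have exactly the same n(n−t) filled cells, any filled cell contains a different entry in each of the μ squares, and each row, column, and symbol of each Q_α is used exactly n−t times (i.e., (Q_1, …, Q_μ) is a μ-way (n−t)-homogeneous circulant Latin trade of order n). -/
theorem transversals_to_trade (n μ t : ℕ) (hn : Odd n) (hμ : 2 ≤ μ)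
    (T : Fin μ → Set (ZMod n × ZMod n × ZMod n))
    (hT : ∀ α, IsTransversal n (T α))
    (S : Set (ZMod n × ZMod n × ZMod n)) (hS : S.ncard = t)
    (hint : S = ⋂ i, T i) (hpair : ∀ i j : Fin μ, i < j → T i ∩ T j = S)
    (Q : Fin μ → Set (ZMod n × ZMod n × ZMod n))
    (hQ : ∀ α, Q α = {x | ∃ i r c : ZMod n, (r, c, r + c) ∈ T α \ S ∧
      x = (i, c + i, r + c + i)}) :
    (∀ α β, {p : ZMod n × ZMod n | ∃ s, (p.1, p.2, s) ∈ Q α}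
      = {p : ZMod n × ZMod n | ∃ s, (p.1, p.2, s) ∈ Q β}) ∧
    (∀ α, {p : ZMod n × ZMod n | ∃ s, (p.1, p.2, s) ∈ Q α}.ncard = n * (n - t)) ∧
    (∀ α β, α ≠ β → ∀ r c sα sβ : ZMod n, (r, c, sα) ∈ Q α → (r, c, sβ) ∈ Q β → sα ≠ sβ) ∧
    (∀ α β, ∀ r : ZMod n, {s : ZMod n | ∃ c, (r, c, s) ∈ Q α}
      = {s : ZMod n | ∃ c, (r, c, s) ∈ Q β}) ∧
    (∀ α β, ∀ c : ZMod n, {s : ZMod n | ∃ r, (r, c, s) ∈ Q α}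
      = {s : ZMod n | ∃ r, (r, c, s) ∈ Q β}) ∧
    (∀ α, ∀ r : ZMod n, {c : ZMod n | ∃ s, (r, c, s) ∈ Q α}.ncard = n - t) ∧
    (∀ α, ∀ c : ZMod n, {r : ZMod n | ∃ s, (r, c, s) ∈ Q α}.ncard = n - t) ∧
    (∀ α, ∀ s : ZMod n, {p : ZMod n × ZMod n | (p.1, p.2, s) ∈ Q α}.ncard = n - t) := by
  haveI : NeZero n := ⟨hn.pos.ne'⟩
  -- selectors
  have hcolE := fun (α : Fin μ) (c : ZMod n) => (hT α).2.2.1 c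
  have hrowE := fun (α : Fin μ) (r : ZMod n) => (hT α).2.1 r
  have hsymE := fun (α : Fin μ) (s : ZMod n) => (hT α).2.2.2 s
  simp only [ExistsUnique] at hcolE hrowE hsymE
  choose fcol hfP hfu using hcolE
  choose frow hrP hru using hrowE
  choose fsym hsP hsu using hsymE
  have hfT := fun α c => (hfP α c).1
  have hfc := fun α c => (hfP α c).2
  have hrT := fun α r => (hrP α r).1
  have hrr := fun α r => (hrP α r).2
  have hsT := fun α s => (hsP α s).1
  have hss := fun α s => (hsP α s).2
  have hSsub : ∀ α, S ⊆ T α := fun α => hint ▸ Set.iInter_subset T α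
  -- canonical form of the column selector
  have hcan : ∀ α c, fcol α c = ((fcol α c).1, c, (fcol α c).1 + c) := by
    intro α c
    have h2 := hfc α c
    have h3 := (hT α).1 _ (hfT α c)
    rw [h2] at h3
    rw [Prod.ext_iff, Prod.ext_iff]
    exact ⟨rfl, h2, h3⟩
  -- membership criterion
  have hmem : ∀ α (a b s : ZMod n), (a, b, s) ∈ Q α ↔
      (fcol α (b - a) ∉ S ∧ s = (fcol α (b - a)).1 + b) := by
    intro α a b s
    rw [hQ]
    simp only [Set.mem_setOf_eq]
    constructor
    · rintro ⟨i, r, c, ⟨hTm, hSm⟩, heq⟩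
      simp only [Prod.mk.injEq] at heq
      obtain ⟨h1, h2, h3⟩ := heq
      have hc : c = b - a := by rw [h2, h1]; ring
      have hx : (r, c, r + c) = fcol α (b - a) := hfu α (b - a) _ ⟨hTm, hc⟩
      refine ⟨by rw [← hx]; exact hSm, ?_⟩
      rw [← hx]
      show s = r + b
      rw [h3, h2]; ring
    · rintro ⟨hS', hs⟩
      refine ⟨a, (fcol α (b - a)).1, b - a, ⟨?_, ?_⟩, ?_⟩
      · rw [← hcan]; exact hfT α (b - a)
      · rw [← hcan]; exact hS'
      · show (a, b, s) = (a, b - a + a, (fcol α (b - a)).1 + (b - a) + a)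
        have hb : b - a + a = b := by ring
        have hs2 : (fcol α (b - a)).1 + (b - a) + a = s := by rw [hs]; ring
        rw [hb, hs2]
    -- the set of columns of S
  have hScol : ∀ α c, fcol α c ∈ S ↔ c ∈ (fun x : ZMod n × ZMod n × ZMod n => x.2.1) '' S := by
    intro α c
    constructor
    · intro h; exact ⟨fcol α c, h, hfc α c⟩
    · rintro ⟨x, hxS, hxc⟩
      rw [← hfu α c x ⟨hSsub α hxS, hxc⟩]
      exact hxS
  set Scol : Set (ZMod n) := (fun x : ZMod n × ZMod n × ZMod n => x.2.1) '' S with hScoldef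
  -- its cardinality
  have α0 : Fin μ := ⟨0, by omega⟩
  have hScard : Scol.ncard = t := by
    rw [hScoldef, Set.ncard_image_of_injOn, hS]
    intro x hx y hy hxy
    exact (hfu α0 x.2.1 x ⟨hSsub α0 hx, rfl⟩).trans
      (hfu α0 x.2.1 y ⟨hSsub α0 hy, hxy.symm⟩).symm
  have hCcard : Scolᶜ.ncard = n - t := by
    have h := Set.ncard_add_ncard_compl Scol
    rw [hScard, Nat.card_eq_fintype_card, ZMod.card] at h
    omega
  -- cell sets
  have hcell : ∀ α, {p : ZMod n × ZMod n | ∃ s, (p.1, p.2, s) ∈ Q α}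
      = {p : ZMod n × ZMod n | (p.2 - p.1) ∈ Scolᶜ} := by
    intro α
    ext p
    simp only [Set.mem_setOf_eq, hmem α p.1 p.2, Set.mem_compl_iff]
    constructor
    · rintro ⟨s, h1, _⟩
      exact fun h => h1 ((hScol α _).mpr h)
    · intro h
      exact ⟨_, fun hs => h ((hScol α _).mp hs), rfl⟩
  refine ⟨?_, ?_, ?_, ?_, ?_, ?_, ?_, ?_⟩
  · -- equal cell sets
    intro α β; rw [hcell α, hcell β]
  · -- number of cells
    intro α
    rw [hcell α]
    have e : {p : ZMod n × ZMod n | (p.2 - p.1) ∈ Scolᶜ} ≃ ZMod n × ↥(Scolᶜ) :=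
      { toFun := fun p => (p.1.1, ⟨p.1.2 - p.1.1, p.2⟩)
        invFun := fun q => ⟨((q.1 : ZMod n), ((q.2 : ZMod n) + q.1 : ZMod n)), by
          show ((q.2 : ZMod n) + q.1 - q.1 : ZMod n) ∈ Scolᶜ
          rw [add_sub_cancel_right]
          exact q.2.2⟩
        left_inv := fun p => Subtype.ext (Prod.ext_iff.mpr ⟨rfl, by simp⟩)
        right_inv := fun q => Prod.ext_iff.mpr ⟨rfl, Subtype.ext (by simp)⟩ }
    rw [← Nat.card_coe_set_eq, Nat.card_congr e, Nat.card_prod,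
      Nat.card_coe_set_eq, hCcard, Nat.card_eq_fintype_card, ZMod.card]
  · -- distinct entries
    intro α β hne r c sα sβ hA hB
    rw [hmem] at hA hB
    intro hs
    have hrow : (fcol α (c - r)).1 = (fcol β (c - r)).1 := by
      have := hA.2.symm.trans (hs.trans hB.2)
      exact add_right_cancel this
    have heq : fcol α (c - r) = fcol β (c - r) := by
      rw [hcan α, hcan β, hrow]
    have : fcol α (c - r) ∈ S := by
      rcases lt_or_gt_of_ne hne with h | h
      · rw [← hpair α β h]; exact ⟨hfT α _, heq ▸ hfT β _⟩
      · rw [← hpair β α h]; exact ⟨heq ▸ hfT β _, hfT α _⟩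
    exact hA.1 this
  · -- row symbol sets
    intro α β r
    have key : ∀ α β, {s : ZMod n | ∃ c, (r, c, s) ∈ Q α} ⊆ {s : ZMod n | ∃ c, (r, c, s) ∈ Q β} := by
      intro α β s hs
      obtain ⟨c, hc⟩ := hs
      rw [hmem] at hc
      obtain ⟨hc1, hc2⟩ := hc
      set x := fcol α (c - r) with hx
      set σ := x.2.2 with hσ
      have hxs : x = fsym α σ := hsu α σ x ⟨hfT α _, rfl⟩
      set y := fsym β σ with hy
      have hyS : y ∉ S := by
        intro hyS
        have : y = fsym α σ := hsu α σ y ⟨hSsub α hyS, hss β σ⟩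
        rw [← hxs] at this
        exact hc1 (this ▸ hyS)
      refine ⟨y.2.1 + r, ?_⟩
      rw [hmem]
      have hd : y.2.1 + r - r = y.2.1 := by ring
      have hfy : fcol β y.2.1 = y := (hfu β y.2.1 y ⟨hsT β σ, rfl⟩).symm
      rw [hd, hfy]
      refine ⟨hyS, ?_⟩
      have hy22 : y.2.2 = y.1 + y.2.1 := (hT β).1 y (hsT β σ)
      have hx22 : x.2.2 = x.1 + (c - r) := by
        have := (hT α).1 x (hfT α _)
        rw [this, hfc α (c - r)]
      have hys : y.2.2 = σ := hss β σ
      rw [hc2]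
      have : x.1 + c = σ + r := by rw [hσ, hx22]; ring
      rw [this, ← hys, hy22]; ring
    exact le_antisymm (key α β) (key β α)
  · -- column symbol sets
    intro α β c
    have key : ∀ α β, {s : ZMod n | ∃ r, (r, c, s) ∈ Q α} ⊆ {s : ZMod n | ∃ r, (r, c, s) ∈ Q β} := by
      intro α β s hs
      obtain ⟨r, hr⟩ := hs
      rw [hmem] at hr
      obtain ⟨h1, h2⟩ := hr
      set x := fcol α (c - r) with hx
      have hxr : x = frow α x.1 := hru α x.1 x ⟨hfT α _, rfl⟩
      set y := frow β x.1 with hy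
      have hyS : y ∉ S := by
        intro hyS
        have : y = frow α x.1 := hru α x.1 y ⟨hSsub α hyS, hrr β x.1⟩
        rw [← hxr] at this
        exact h1 (this ▸ hyS)
      refine ⟨c - y.2.1, ?_⟩
      rw [hmem]
      have hd : c - (c - y.2.1) = y.2.1 := by ring
      have hfy : fcol β y.2.1 = y := (hfu β y.2.1 y ⟨hrT β x.1, rfl⟩).symm
      rw [hd, hfy]
      refine ⟨hyS, ?_⟩
      rw [h2, hrr β x.1]
    exact le_antisymm (key α β) (key β α)
  · -- row counts
    intro α r
    have : {c : ZMod n | ∃ s, (r, c, s) ∈ Q α} = (· + r) '' Scolᶜ := by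
      ext c
      simp only [Set.mem_setOf_eq, hmem α r c, Set.mem_image]
      constructor
      · rintro ⟨s, h1, _⟩
        exact ⟨c - r, fun h => h1 ((hScol α _).mpr h), by ring⟩
      · rintro ⟨d, hd, hdc⟩
        subst hdc
        have : d + r - r = d := by ring
        rw [this]
        exact ⟨_, fun hs => hd ((hScol α _).mp hs), rfl⟩
    rw [this, Set.ncard_image_of_injective _ (add_left_injective r), hCcard]
  · -- column counts
    intro α c
    have : {r : ZMod n | ∃ s, (r, c, s) ∈ Q α} = (fun d => c - d) '' Scolᶜ := by
      ext r
      simp only [Set.mem_setOf_eq, hmem α r c, Set.mem_image]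
      constructor
      · rintro ⟨s, h1, _⟩
        exact ⟨c - r, fun h => h1 ((hScol α _).mpr h), by ring⟩
      · rintro ⟨d, hd, hdc⟩
        subst hdc
        have : c - (c - d) = d := by ring
        rw [this]
        exact ⟨_, fun hs => hd ((hScol α _).mp hs), rfl⟩
    rw [this, Set.ncard_image_of_injective _ sub_right_injective, hCcard]
  · -- symbol counts
    intro α s
    have : {p : ZMod n × ZMod n | (p.1, p.2, s) ∈ Q α}
        = (fun d => (s - (fcol α d).2.2, s - (fcol α d).1)) '' Scolᶜ := by
      ext p
      simp only [Set.mem_setOf_eq, hmem α p.1 p.2, Set.mem_image]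
      constructor
      · rintro ⟨h1, h2⟩
        refine ⟨p.2 - p.1, fun h => h1 ((hScol α _).mpr h), ?_⟩
        set x := fcol α (p.2 - p.1) with hx
        have hx22 : x.2.2 = x.1 + (p.2 - p.1) := by
          have := (hT α).1 x (hfT α _)
          rw [this, hfc α (p.2 - p.1)]
        have hp2 : s - x.1 = p.2 := by rw [h2]; ring
        have hp1 : s - x.2.2 = p.1 := by rw [hx22, h2]; ring
        rw [Prod.ext_iff]
        exact ⟨hp1, hp2⟩
      · rintro ⟨d, hd, hdp⟩
        set x := fcol α d with hx
        have hx22 : x.2.2 = x.1 + d := by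
          have := (hT α).1 x (hfT α _)
          rw [this, hfc α d]
        have hpd : p.2 - p.1 = d := by
          rw [← hdp]
          show s - x.1 - (s - x.2.2) = d
          rw [hx22]; ring
        rw [hpd]
        refine ⟨fun hs' => hd ((hScol α _).mp hs'), ?_⟩
        rw [← hdp]
        show s = x.1 + (s - x.1)
        ring
    rw [this]
    rw [Set.ncard_image_of_injOn, hCcard]
    intro d1 h1 d2 h2 he
    have c1 : s - (fcol α d1).1 - (s - (fcol α d1).2.2) = d1 := by
      have hx22 : (fcol α d1).2.2 = (fcol α d1).1 + d1 := by
        have := (hT α).1 _ (hfT α d1)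
        rw [this, hfc α d1]
      rw [hx22]; ring
    have c2 : s - (fcol α d2).1 - (s - (fcol α d2).2.2) = d2 := by
      have hx22 : (fcol α d2).2.2 = (fcol α d2).1 + d2 := by
        have := (hT α).1 _ (hfT α d2)
        rw [this, hfc α d2]
      rw [hx22]; ring
    simp only [Prod.mk.injEq] at he
    rw [← c1, ← c2, he.1, he.2]
end

section
/- For every integer I ≥ 1, the 2I-fold sumset 2I·{0, 1, 9} of the set {0,1,9} equals [0, 18I] \ ⋃_{i=1}^{7} [18I − 8i + 1, 18I − 9i + 8]. -/
lemma sumset_rep_019 (n : ℕ) (s : ℤ) :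
    (∃ f : Fin n → ℤ, (∀ i, f i ∈ ({0, 1, 9} : Set ℤ)) ∧ s = ∑ i, f i) ↔
    (∃ b c : ℕ, b + c ≤ n ∧ s = (b : ℤ) + 9 * c) := by
  induction n generalizing s with
  | zero =>
    constructor
    · rintro ⟨f, hf, rfl⟩
      exact ⟨0, 0, by omega, by simp⟩
    · rintro ⟨b, c, hbc, rfl⟩
      refine ⟨fun i => 0, fun i => by simp, ?_⟩
      simp
      omega
  | succ n ih =>
    constructor
    · rintro ⟨f, hf, rfl⟩
      obtain ⟨b, c, hbc, hs⟩ := (ih (∑ i : Fin n, f i.succ)).mp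
        ⟨fun i : Fin n => f i.succ, fun i : Fin n => hf i.succ, rfl⟩
      have h0 := hf 0
      simp only [Set.mem_insert_iff, Set.mem_singleton_iff] at h0
      rw [Fin.sum_univ_succ]
      rcases h0 with h | h | h
      · exact ⟨b, c, by omega, by rw [h, hs]; ring⟩
      · exact ⟨b + 1, c, by omega, by rw [h, hs]; push_cast; ring⟩
      · exact ⟨b, c + 1, by omega, by rw [h, hs]; push_cast; ring⟩
    · rintro ⟨b, c, hbc, rfl⟩
      match b, c with
      | 0, 0 =>
        refine ⟨fun i => 0, fun i => by simp, ?_⟩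
        simp
      | b + 1, c =>
        obtain ⟨f, hf, hsum⟩ := (ih ((b : ℤ) + 9 * c)).mpr ⟨b, c, by omega, rfl⟩
        refine ⟨Fin.cons 1 f, ?_, ?_⟩
        · intro i
          refine Fin.cases ?_ ?_ i
          · simp
          · intro j; simpa using hf j
        · rw [Fin.sum_univ_succ]
          simp only [Fin.cons_zero, Fin.cons_succ]
          rw [← hsum]
          push_cast
          ring
      | 0, c + 1 =>
        obtain ⟨f, hf, hsum⟩ := (ih ((0 : ℤ) + 9 * c)).mpr ⟨0, c, by omega, by norm_num⟩
        refine ⟨Fin.cons 9 f, ?_, ?_⟩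
        · intro i
          refine Fin.cases ?_ ?_ i
          · simp
          · intro j; simpa using hf j
        · rw [Fin.sum_univ_succ]
          simp only [Fin.cons_zero, Fin.cons_succ]
          rw [← hsum]
          push_cast
          ring

theorem sumset_2I_019 (I : ℕ) (hI : 1 ≤ I) :
    {s : ℤ | ∃ f : Fin (2 * I) → ℤ, (∀ i, f i ∈ ({0, 1, 9} : Set ℤ)) ∧ s = ∑ i, f i}
      = Set.Icc 0 (18 * (I : ℤ)) \
        (⋃ i ∈ Set.Icc (1 : ℤ) 7,
          Set.Icc (18 * (I : ℤ) - 8 * i + 1) (18 * (I : ℤ) - 9 * i + 8)) := by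
  ext s
  simp only [Set.mem_setOf_eq, Set.mem_diff, Set.mem_Icc, Set.mem_iUnion, not_exists,
    exists_prop, not_and]
  rw [sumset_rep_019]
  constructor
  · rintro ⟨b, c, hbc, rfl⟩
    refine ⟨⟨by positivity, by push_cast; omega⟩, ?_⟩
    intro i hi
    omega
  · rintro ⟨⟨h0, h1⟩, hg⟩
    set i : ℤ := (18 * (I : ℤ) - s + 8) / 9 with hi
    have hgi := hg i
    refine ⟨(9 * i - (18 * (I : ℤ) - s)).toNat, (2 * (I : ℤ) - i).toNat, ?_, ?_⟩
    · omega
    · push_cast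
      omega
end

section
/- For every integer I ≥ 1, the 2I-fold sumset 2I·{0, 1, 2, 3, 11} equals [0, 22I] \ ( {22I − 23} ∪ [22I − 15, 22I − 12] ∪ [22I − 7, 22I − 1] ), where negative-length or out-of-range pieces are interpreted as intersected with [0, 22I]. -/
private lemma sumset_split (n : ℕ) (s : ℤ) :
    (∃ f : Fin (n+1) → ℤ, (∀ i, f i ∈ ({0, 1, 2, 3, 11} : Set ℤ)) ∧ s = ∑ i, f i) ↔
    (∃ a ∈ ({0, 1, 2, 3, 11} : Set ℤ), ∃ g : Fin n → ℤ,
      (∀ i, g i ∈ ({0, 1, 2, 3, 11} : Set ℤ)) ∧ s = a + ∑ i, g i) := by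
  constructor
  · rintro ⟨f, hf, rfl⟩
    refine ⟨f (Fin.last n), hf _, fun i => f i.castSucc, fun i => hf _, ?_⟩
    rw [Fin.sum_univ_castSucc]; ring
  · rintro ⟨a, ha, g, hg, rfl⟩
    refine ⟨Fin.snoc g a, ?_, ?_⟩
    · intro i
      refine Fin.lastCases ?_ ?_ i
      · simpa using ha
      · intro j; simpa using hg j
    · rw [Fin.sum_univ_castSucc]
      simp only [Fin.snoc_castSucc, Fin.snoc_last]
      ring

private lemma sumset_charac (n : ℕ) (hn : 1 ≤ n) (s : ℤ) :
    (∃ f : Fin n → ℤ, (∀ i, f i ∈ ({0, 1, 2, 3, 11} : Set ℤ)) ∧ s = ∑ i, f i) ↔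
    ∃ m : ℤ, 0 ≤ m ∧ m ≤ (n : ℤ) ∧ 11 * m ≤ s ∧ s ≤ 3 * (n : ℤ) + 8 * m := by
  induction n, hn using Nat.le_induction generalizing s with
  | base =>
    constructor
    · rintro ⟨f, hf, rfl⟩
      have := hf 0
      simp only [Set.mem_insert_iff, Set.mem_singleton_iff] at this
      rw [Fin.sum_univ_one]
      rcases this with h | h | h | h | h <;> rw [h]
      · exact ⟨0, by norm_num⟩
      · exact ⟨0, by norm_num⟩
      · exact ⟨0, by norm_num⟩
      · exact ⟨0, by norm_num⟩
      · exact ⟨1, by norm_num⟩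
    · rintro ⟨m, hm0, hm1, hms, hsm⟩
      refine ⟨fun _ => s, fun i => ?_, by rw [Fin.sum_univ_one]⟩
      simp only [Set.mem_insert_iff, Set.mem_singleton_iff]
      push_cast at hm1 hsm
      omega
  | succ n hn ih =>
    rw [sumset_split]
    constructor
    · rintro ⟨a, ha, g, hg, rfl⟩
      obtain ⟨m, hm0, hm1, hms, hsm⟩ := (ih (∑ i, g i)).mp ⟨g, hg, rfl⟩
      simp only [Set.mem_insert_iff, Set.mem_singleton_iff] at ha
      rcases ha with h | h | h | h | h
      · exact ⟨m, by push_cast; omega⟩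
      · exact ⟨m, by push_cast; omega⟩
      · exact ⟨m, by push_cast; omega⟩
      · exact ⟨m, by push_cast; omega⟩
      · exact ⟨m + 1, by push_cast; omega⟩
    · rintro ⟨m, hm0, hm1, hms, hsm⟩
      push_cast at hm1 hsm
      by_cases hmtop : m = (n : ℤ) + 1
      · refine ⟨11, by norm_num, ?_⟩
        obtain ⟨g, hg, hsum⟩ := (ih (s - 11)).mpr ⟨(n : ℤ), by omega, le_refl _, by omega, by omega⟩
        exact ⟨g, hg, by omega⟩
      · by_cases hlow : s ≤ 3 * (n : ℤ) + 8 * m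
        · refine ⟨0, by norm_num, ?_⟩
          obtain ⟨g, hg, hsum⟩ := (ih s).mpr ⟨m, by omega, by omega, by omega, by omega⟩
          exact ⟨g, hg, by omega⟩
        · refine ⟨s - (3 * (n : ℤ) + 8 * m), ?_, ?_⟩
          · simp only [Set.mem_insert_iff, Set.mem_singleton_iff]
            omega
          · obtain ⟨g, hg, hsum⟩ :=
              (ih (3 * (n : ℤ) + 8 * m)).mpr ⟨m, by omega, by omega, by omega, by omega⟩
            exact ⟨g, hg, by omega⟩

theorem sumset_2I_0123_11 (I : ℕ) (hI : 1 ≤ I) :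
    {s : ℤ | ∃ f : Fin (2 * I) → ℤ, (∀ i, f i ∈ ({0, 1, 2, 3, 11} : Set ℤ)) ∧ s = ∑ i, f i}
      = Set.Icc 0 (22 * (I : ℤ)) \
        ((({22 * (I : ℤ) - 23} : Set ℤ)
          ∪ Set.Icc (22 * (I : ℤ) - 15) (22 * (I : ℤ) - 12)
          ∪ Set.Icc (22 * (I : ℤ) - 7) (22 * (I : ℤ) - 1))
          ∩ Set.Icc 0 (22 * (I : ℤ))) := by
  ext s
  rw [Set.mem_setOf_eq, sumset_charac (2 * I) (by omega) s]
  simp only [Set.mem_diff, Set.mem_Icc, Set.mem_inter_iff, Set.mem_union,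
    Set.mem_singleton_iff]
  have hI' : (1 : ℤ) ≤ (I : ℤ) := by exact_mod_cast hI
  constructor
  · rintro ⟨m, hm0, hm1, hms, hsm⟩
    push_cast at hm1 hsm
    refine ⟨⟨by omega, by omega⟩, ?_⟩
    rintro ⟨(h | ⟨h, h'⟩) | ⟨h, h'⟩, -⟩ <;> omega
  · rintro ⟨⟨h0, h1⟩, h2⟩
    have hb1 : s ≠ 22 * (I : ℤ) - 23 := fun h => h2 ⟨Or.inl (Or.inl h), h0, h1⟩
    have hb2 : ¬ (22 * (I : ℤ) - 15 ≤ s ∧ s ≤ 22 * (I : ℤ) - 12) :=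
      fun h => h2 ⟨Or.inl (Or.inr h), h0, h1⟩
    have hb3 : ¬ (22 * (I : ℤ) - 7 ≤ s ∧ s ≤ 22 * (I : ℤ) - 1) :=
      fun h => h2 ⟨Or.inr h, h0, h1⟩
    rw [not_and_or] at hb2 hb3
    rcases le_or_gt s (6 * (I : ℤ)) with hlo | hlo
    · refine ⟨0, le_refl 0, ?_, ?_, ?_⟩ <;> push_cast <;> omega
    · by_cases hc1 : s ≤ 22 * (I : ℤ) - 26
      · exact ⟨(s - 6 * (I : ℤ) + 7) / 8, by push_cast; omega⟩
      · by_cases hc2 : s ≤ 22 * (I : ℤ) - 24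
        · exact ⟨2 * (I : ℤ) - 3, by push_cast; omega⟩
        · by_cases hc3 : s ≤ 22 * (I : ℤ) - 16
          · exact ⟨2 * (I : ℤ) - 2, by push_cast; omega⟩
          · by_cases hc4 : s ≤ 22 * (I : ℤ) - 8
            · exact ⟨2 * (I : ℤ) - 1, by push_cast; omega⟩
            · exact ⟨2 * (I : ℤ), by push_cast; omega⟩
end

section
/- For every integer I ≥ 1, the 2I-fold sumset 2I·{1, 2, 3, 4, 5, 15} equals [2I, 30I] \ ( {30I − 29} ∪ [30I − 19, 30I − 15] ∪ [30I − 9, 30I − 1] ), where out-of-range pieces are intersected with [2I, 30I]. -/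
lemma construct_aux : ∀ (n k : ℕ) (r : ℤ), k ≤ n → (n : ℤ) - k ≤ r → r ≤ 5 * ((n : ℤ) - k) →
    ∃ f : Fin n → ℤ, (∀ i, f i ∈ ({1, 2, 3, 4, 5, 15} : Set ℤ)) ∧ ∑ i, f i = 15 * k + r := by
  intro n
  induction n with
  | zero =>
    intro k r hk h1 h2
    interval_cases k
    refine ⟨Fin.elim0, fun i => i.elim0, ?_⟩
    simp; omega
  | succ n ih =>
    intro k r hk h1 h2
    match k with
    | 0 =>
      push_cast at h1 h2 ⊢
      set v : ℤ := if r - 5 * n ≥ 1 then r - 5 * n else 1 with hv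
      have hv15 : 1 ≤ v ∧ v ≤ 5 := by rw [hv]; split <;> omega
      obtain ⟨g, hg, hgs⟩ := ih 0 (r - v) (Nat.zero_le _)
        (by rw [hv]; split <;> push_cast <;> omega)
        (by rw [hv]; split <;> push_cast <;> omega)
      refine ⟨Fin.cons v g, ?_, ?_⟩
      · intro i
        refine Fin.cases ?_ ?_ i
        · simp only [Fin.cons_zero]
          have : v = 1 ∨ v = 2 ∨ v = 3 ∨ v = 4 ∨ v = 5 := by omega
          rcases this with h|h|h|h|h <;> simp [h]
        · intro j; simpa using hg j
      · rw [Fin.sum_cons, hgs]; push_cast at *; omega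
    | k + 1 =>
      obtain ⟨g, hg, hgs⟩ := ih k r (by omega) (by push_cast at *; omega) (by push_cast at *; omega)
      refine ⟨Fin.cons 15 g, ?_, ?_⟩
      · intro i
        refine Fin.cases ?_ ?_ i
        · simp
        · intro j; simpa using hg j
      · rw [Fin.sum_cons, hgs]; push_cast; ring

theorem sumset_2I_12345_15 (I : ℕ) (hI : 1 ≤ I) :
    {s : ℤ | ∃ f : Fin (2 * I) → ℤ, (∀ i, f i ∈ ({1, 2, 3, 4, 5, 15} : Set ℤ)) ∧ s = ∑ i, f i}
      = Set.Icc (2 * (I : ℤ)) (30 * (I : ℤ)) \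
        ((({30 * (I : ℤ) - 29} : Set ℤ)
          ∪ Set.Icc (30 * (I : ℤ) - 19) (30 * (I : ℤ) - 15)
          ∪ Set.Icc (30 * (I : ℤ) - 9) (30 * (I : ℤ) - 1))
          ∩ Set.Icc (2 * (I : ℤ)) (30 * (I : ℤ))) := by
  ext s
  simp only [Set.mem_setOf_eq, Set.mem_diff, Set.mem_Icc, Set.mem_inter_iff, Set.mem_union,
    Set.mem_singleton_iff]
  constructor
  · rintro ⟨f, hf, rfl⟩
    set T : Finset (Fin (2 * I)) := Finset.univ.filter (fun i => f i = 15) with hT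
    set k := T.card with hk
    set m := Tᶜ.card with hm
    have hkm : k + m = 2 * I := by
      rw [hk, hm, Finset.card_add_card_compl]; simp
    have hsum : ∑ i, f i = ∑ i ∈ T, f i + ∑ i ∈ Tᶜ, f i :=
      (Finset.sum_add_sum_compl T f).symm
    have h15 : ∑ i ∈ T, f i = 15 * k := by
      rw [Finset.sum_congr rfl (fun i hi => by simp [hT] at hi; exact hi)]
      simp [hk, mul_comm]
    have hmem : ∀ i ∈ Tᶜ, 1 ≤ f i ∧ f i ≤ 5 := by
      intro i hi
      simp [hT] at hi
      have := hf i
      simp at this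
      rcases this with h|h|h|h|h|h <;> simp [h] at hi ⊢ <;> omega
    have hlo : (m : ℤ) * 1 ≤ ∑ i ∈ Tᶜ, f i := by
      rw [hm]
      calc ((Tᶜ.card : ℤ)) * 1 = ∑ _i ∈ Tᶜ, (1:ℤ) := by simp
        _ ≤ ∑ i ∈ Tᶜ, f i := Finset.sum_le_sum (fun i hi => (hmem i hi).1)
    have hhi : ∑ i ∈ Tᶜ, f i ≤ (m : ℤ) * 5 := by
      rw [hm]
      calc ∑ i ∈ Tᶜ, f i ≤ ∑ _i ∈ Tᶜ, (5:ℤ) := Finset.sum_le_sum (fun i hi => (hmem i hi).2)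
        _ = (Tᶜ.card : ℤ) * 5 := by simp [mul_comm]
    rw [hsum, h15]
    have hkI : (k : ℤ) + (m : ℤ) = 2 * I := by exact_mod_cast congrArg (Nat.cast : ℕ → ℤ) hkm
    omega
  · rintro ⟨⟨h1, h2⟩, h3⟩
    set k : ℕ := ((s - 10 * I + 9) / 10).toNat with hkdef
    have hk1 : k ≤ 2 * I := by omega
    obtain ⟨f, hf, hfs⟩ := construct_aux (2 * I) k (s - 15 * k) hk1
      (by push_cast at *; omega) (by push_cast at *; omega)
    exact ⟨f, hf, by rw [hfs]; ring⟩
end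

section
/- Let n be odd, n = 2bI + b + 2d with b odd, 3 ≤ b ≤ n/3, I ≥ 1, 0 ≤ d ≤ b−1, and μ ≥ 2. Suppose for each i ∈ {1,…,2I} there exist μ partial transversals of the b×b block B_{0,b} of B_n (using each symbol of {(b−1)/2, …, 3(b−1)/2} exactly once per partial transversal) intersecting stably in t_i points, and there exist μ partial transversals of the (b+d)×(b+d) block B_{0,b+d} using each symbol of {(b−1)/2,…,3(b−1)/2 + 2d} \ {b + 2j : 0 ≤ j < d} exactly once, intersecting stably in t₀ points. Then there exist μ transversals of B_n intersecting stably in exactly d + Σ_{i=0}^{2I} t_i points. -/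
def IsPartialTransversalIn (m : ℕ) (Sym : Set ℕ) (P : Set (ℕ × ℕ)) : Prop :=
  (∀ x ∈ P, x.1 < m ∧ x.2 < m) ∧
  (∀ r < m, ∃! x : ℕ × ℕ, x ∈ P ∧ x.1 = r) ∧
  (∀ c < m, ∃! x : ℕ × ℕ, x ∈ P ∧ x.2 = c) ∧
  (∀ x ∈ P, x.1 + x.2 ∈ Sym) ∧
  (∀ s ∈ Sym, ∃! x : ℕ × ℕ, x ∈ P ∧ x.1 + x.2 = s)

def StablyIntersectP (μ : ℕ) (P : Fin μ → Set (ℕ × ℕ)) (t : ℕ) : Prop :=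
  ∃ S : Set (ℕ × ℕ), S.ncard = t ∧ S = ⋂ i, P i ∧
    ∀ i j : Fin μ, i < j → P i ∩ P j = S

open Set

lemma existsUnique_of_injOn_of_ncard_eq {X Y : Type*} [Finite Y] {f : X → Y} {A : Set X}
    (hf : InjOn f A) (hA : A.ncard = Nat.card Y) (y : Y) : ∃! x, x ∈ A ∧ f x = y := by
  have himage : f '' A = univ :=
    eq_of_subset_of_ncard_le (subset_univ _) (by rw [hf.ncard_image, hA, ncard_univ]) (toFinite _)
  obtain ⟨x, hx, rfl⟩ := himage.symm ▸ mem_univ y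
  exact ⟨x, ⟨hx, rfl⟩, fun z hz => hf hz.1 hx hz.2⟩

lemma injOn_of_existsUnique {X Y : Type*} {f : X → Y} {A : Set X} {B : Set Y}
    (hmaps : MapsTo f A B) (h : ∀ y ∈ B, ∃! x, x ∈ A ∧ f x = y) : InjOn f A :=
  fun _ hx _ hx' hxx' => (h _ (hmaps hx)).unique ⟨hx, rfl⟩ ⟨hx', hxx'.symm⟩

lemma IsTransversal.of_injOn {n : ℕ} [NeZero n] {T : Set (ZMod n × ZMod n × ZMod n)}
    (hlaw : ∀ x ∈ T, x.2.2 = x.1 + x.2.1) (hrow : InjOn Prod.fst T)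
    (hcol : InjOn (fun x => x.2.1) T) (hsym : InjOn (fun x => x.2.2) T) (hcard : T.ncard = n) :
    IsTransversal n T := by
  replace hcard : T.ncard = Nat.card (ZMod n) := hcard.trans (Nat.card_zmod n).symm
  exact ⟨hlaw, existsUnique_of_injOn_of_ncard_eq hrow hcard,
    existsUnique_of_injOn_of_ncard_eq hcol hcard, existsUnique_of_injOn_of_ncard_eq hsym hcard⟩

namespace IsPartialTransversalIn

variable {m : ℕ} {Sym : Set ℕ} {P : Set (ℕ × ℕ)}

lemma subset_box (h : IsPartialTransversalIn m Sym P) : P ⊆ Iio m ×ˢ Iio m :=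
  fun x hx => h.1 x hx

lemma finite (h : IsPartialTransversalIn m Sym P) : P.Finite :=
  ((finite_Iio m).prod (finite_Iio m)).subset h.subset_box

lemma injOn_fst (h : IsPartialTransversalIn m Sym P) : InjOn Prod.fst P :=
  injOn_of_existsUnique (fun x hx => (h.1 x hx).1) h.2.1

lemma injOn_snd (h : IsPartialTransversalIn m Sym P) : InjOn Prod.snd P :=
  injOn_of_existsUnique (fun x hx => (h.1 x hx).2) h.2.2.1

lemma injOn_add (h : IsPartialTransversalIn m Sym P) : InjOn (fun x => x.1 + x.2) P :=
  injOn_of_existsUnique h.2.2.2.1 h.2.2.2.2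

lemma ncard_eq (h : IsPartialTransversalIn m Sym P) : P.ncard = m := by
  have hbij : BijOn Prod.fst P (Iio m) := ⟨fun x hx => (h.1 x hx).1, h.injOn_fst,
    fun r hr => let ⟨x, ⟨hx, hxr⟩, _⟩ := h.2.1 r hr; ⟨x, hx, hxr⟩⟩
  rw [hbij.ncard_eq, ncard_Iio_nat]

end IsPartialTransversalIn

lemma isPartialTransversalIn_diagonal (d : ℕ) :
    IsPartialTransversalIn d ((fun r => r + r) '' Iio d) ((fun r => (r, r)) '' Iio d) := by
  refine ⟨?_, ?_, ?_, ?_, ?_⟩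
  · rintro _ ⟨r, hr, rfl⟩
    exact ⟨hr, hr⟩
  · intro r hr
    refine ⟨(r, r), ⟨⟨r, hr, rfl⟩, rfl⟩, ?_⟩
    rintro _ ⟨⟨r', -, rfl⟩, rfl⟩
    rfl
  · intro r hr
    refine ⟨(r, r), ⟨⟨r, hr, rfl⟩, rfl⟩, ?_⟩
    rintro _ ⟨⟨r', -, rfl⟩, rfl⟩
    rfl
  · rintro _ ⟨r, hr, rfl⟩
    exact ⟨r, hr, rfl⟩
  · rintro _ ⟨r, hr, rfl⟩
    refine ⟨(r, r), ⟨⟨r, hr, rfl⟩, rfl⟩, ?_⟩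
    rintro _ ⟨⟨r', -, rfl⟩, h⟩
    simp only [Prod.mk.injEq] at h ⊢
    omega

namespace StablyIntersectP

variable {μ t : ℕ} {P : Fin μ → Set (ℕ × ℕ)}

lemma ncard_iInter (h : StablyIntersectP μ P t) : (⋂ α, P α).ncard = t := by
  obtain ⟨S, hS, rfl, -⟩ := h
  exact hS

lemma inter_eq_iInter (h : StablyIntersectP μ P t) {α β : Fin μ} (hαβ : α < β) :
    P α ∩ P β = ⋂ γ, P γ := by
  obtain ⟨S, -, rfl, hS⟩ := h
  exact hS α β hαβ

lemma const [NeZero μ] (Q : Set (ℕ × ℕ)) : StablyIntersectP μ (fun _ => Q) Q.ncard :=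
  ⟨Q, rfl, (iInter_const Q).symm, fun _ _ _ => inter_self Q⟩

end StablyIntersectP

def blockwise {ι β : Type*} (s : Finset ι) (A : ι → Set β) : Set (ι × β) :=
  {x | x.1 ∈ s ∧ x.2 ∈ A x.1}

section Blockwise

variable {ι β : Type*} (s : Finset ι)

lemma blockwise_mono {A A' : ι → Set β} (h : ∀ i ∈ s, A i ⊆ A' i) :
    blockwise s A ⊆ blockwise s A' :=
  fun _ hx => ⟨hx.1, h _ hx.1 hx.2⟩

lemma blockwise_congr {A A' : ι → Set β} (h : ∀ i ∈ s, A i = A' i) :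
    blockwise s A = blockwise s A' :=
  (blockwise_mono s fun i hi => (h i hi).le).antisymm (blockwise_mono s fun i hi => (h i hi).ge)

lemma blockwise_inter (A A' : ι → Set β) :
    blockwise s A ∩ blockwise s A' = blockwise s fun i => A i ∩ A' i := by
  ext x
  exact and_and_left.symm

lemma iInter_blockwise {κ : Type*} [Nonempty κ] (A : κ → ι → Set β) :
    ⋂ a, blockwise s (A a) = blockwise s fun i => ⋂ a, A a i := by
  ext x
  simp [blockwise, forall_and]

lemma ncard_blockwise {A : ι → Set β} (hA : ∀ i ∈ s, (A i).Finite) :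
    (blockwise s A).ncard = ∑ i ∈ s, (A i).ncard := by
  have hunion : blockwise s A = ⋃ i ∈ (s : Set ι), Prod.mk i '' A i := by
    ext ⟨i, y⟩
    simp [blockwise, and_comm]
  rw [hunion, Finite.ncard_biUnion s.finite_toSet (fun i hi => (hA i hi).image _),
    ← finsum_mem_coe_finset]
  · exact finsum_mem_congr rfl fun i _ => (Prod.mk_right_injective i).injOn.ncard_image
  · intro i _ j _ hij
    simp only [Function.onFun, disjoint_left, mem_image]
    rintro _ ⟨y, -, rfl⟩ ⟨y', -, h⟩
    exact hij (congrArg Prod.fst h).symm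

end Blockwise

/-- The cell `(r, c)` of the diagonal subsquare `B_{o,m}`, in block-local coordinates. -/
def blockCell (n o : ℕ) (p : ℕ × ℕ) : ZMod n × ZMod n × ZMod n :=
  (((o + p.1 : ℕ) : ZMod n), ((o + p.2 : ℕ) : ZMod n),
    ((o + p.1 : ℕ) : ZMod n) + ((o + p.2 : ℕ) : ZMod n))

lemma blockCell_symbol (n o : ℕ) (p : ℕ × ℕ) :
    (blockCell n o p).2.2 = ((2 * o + (p.1 + p.2) : ℕ) : ZMod n) := by
  simp only [blockCell]
  push_cast
  ring

/-- A diagonal subsquare `B_{offset,size}` of `B_n` carrying `μ` partial transversals, given in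
block-local coordinates: a local cell `(r, c)` has local symbol `r + c ∈ symbols` and symbol
`2 * offset + r + c` in `B_n`. -/
structure DiagonalBlock (μ : ℕ) where
  offset : ℕ
  size : ℕ
  symbols : Set ℕ
  cells : Fin μ → Set (ℕ × ℕ)

namespace DiagonalBlock

variable {μ : ℕ} {ι : Type*} (n : ℕ) (s : Finset ι) (B : ι → DiagonalBlock μ)

def DisjointRows : Prop :=
  InjOn (fun x : ι × ℕ => (((B x.1).offset + x.2 : ℕ) : ZMod n))
    (blockwise s fun i => Iio (B i).size)

def DisjointSymbols : Prop :=
  InjOn (fun x : ι × ℕ => ((2 * (B x.1).offset + x.2 : ℕ) : ZMod n))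
    (blockwise s fun i => (B i).symbols)

def place (x : ι × ℕ × ℕ) : ZMod n × ZMod n × ZMod n :=
  blockCell n (B x.1).offset x.2

def assemble (α : Fin μ) : Set (ZMod n × ZMod n × ZMod n) :=
  place n B '' blockwise s fun i => (B i).cells α

variable {n s B}

lemma DisjointRows.injOn_place (h : DisjointRows n s B) :
    InjOn (place n B) (blockwise s fun i => Iio (B i).size ×ˢ Iio (B i).size) := by
  rintro ⟨i, p⟩ ⟨hi, hp⟩ ⟨j, q⟩ ⟨hj, hq⟩ hpq
  simp only [place, blockCell, Prod.mk.injEq] at hpq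
  obtain ⟨rfl, h1⟩ := Prod.mk.inj (h ⟨hi, hp.1⟩ ⟨hj, hq.1⟩ hpq.1)
  obtain ⟨-, h2⟩ := Prod.mk.inj (h ⟨hi, hp.2⟩ ⟨hj, hq.2⟩ hpq.2.1)
  exact Prod.ext rfl (Prod.ext h1 h2)

/-- Rows, columns and symbols alike: a coordinate `g` of the assembled cells is injective once it
is determined by the block and a local statistic `f` that is injective within each block. -/
lemma injOn_image_place {Z : Type*} {A : ι → Set (ℕ × ℕ)} {K : ι → Set ℕ}
    (g : ZMod n × ZMod n × ZMod n → Z) (f : ℕ × ℕ → ℕ) (key : ι × ℕ → Z)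
    (hg : ∀ x, g (place n B x) = key (x.1, f x.2)) (hkey : InjOn key (blockwise s K))
    (hmaps : ∀ i ∈ s, MapsTo f (A i) (K i)) (hf : ∀ i ∈ s, InjOn f (A i)) :
    InjOn g (place n B '' blockwise s A) := by
  rintro _ ⟨⟨i, p⟩, ⟨hi, hp⟩, rfl⟩ _ ⟨⟨j, q⟩, ⟨hj, hq⟩, rfl⟩ h
  rw [hg, hg] at h
  obtain ⟨rfl, h'⟩ := Prod.mk.inj (hkey ⟨hi, hmaps i hi hp⟩ ⟨hj, hmaps j hj hq⟩ h)
  dsimp only at hp hq h' ⊢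
  rw [hf i hi hp hq h']

theorem isTransversal_assemble [NeZero n] (hrows : DisjointRows n s B)
    (hsyms : DisjointSymbols n s B) (hsize : ∑ i ∈ s, (B i).size = n) (α : Fin μ)
    (hP : ∀ i ∈ s, IsPartialTransversalIn (B i).size (B i).symbols ((B i).cells α)) :
    IsTransversal n (assemble n s B α) := by
  refine IsTransversal.of_injOn ?_ ?_ ?_ ?_ ?_
  · rintro _ ⟨x, -, rfl⟩
    rfl
  · exact injOn_image_place _ Prod.fst _ (fun _ => rfl) hrows
      (fun i hi p hp => ((hP i hi).subset_box hp).1) fun i hi => (hP i hi).injOn_fst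
  · exact injOn_image_place _ Prod.snd _ (fun _ => rfl) hrows
      (fun i hi p hp => ((hP i hi).subset_box hp).2) fun i hi => (hP i hi).injOn_snd
  · exact injOn_image_place _ (fun p => p.1 + p.2)
      (fun x : ι × ℕ => ((2 * (B x.1).offset + x.2 : ℕ) : ZMod n))
      (fun x => blockCell_symbol n _ x.2) hsyms
      (fun i hi p hp => (hP i hi).2.2.2.1 p hp) fun i hi => (hP i hi).injOn_add
  · unfold assemble
    rw [(hrows.injOn_place.mono (blockwise_mono s fun i hi => (hP i hi).subset_box)).ncard_image,
      ncard_blockwise s fun i hi => (hP i hi).finite, ← hsize]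
    exact Finset.sum_congr rfl fun i hi => (hP i hi).ncard_eq

theorem stablyIntersect_assemble [NeZero μ] (hrows : DisjointRows n s B)
    (hbox : ∀ i ∈ s, ∀ α, (B i).cells α ⊆ Iio (B i).size ×ˢ Iio (B i).size) {t : ι → ℕ}
    (hstab : ∀ i ∈ s, StablyIntersectP μ (B i).cells (t i)) :
    StablyIntersect n μ (assemble n s B) (∑ i ∈ s, t i) := by
  have hsub : ∀ α, (blockwise s fun i => (B i).cells α) ⊆
      blockwise s fun i => Iio (B i).size ×ˢ Iio (B i).size :=
    fun α => blockwise_mono s fun i hi => hbox i hi α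
  have hcore : (blockwise s fun i => ⋂ α, (B i).cells α) ⊆ blockwise s fun i => (B i).cells 0 :=
    blockwise_mono s fun i _ => iInter_subset _ 0
  have hinj := hrows.injOn_place
  refine ⟨place n B '' blockwise s fun i => ⋂ α, (B i).cells α, ?_, ?_, ?_⟩
  · rw [(hinj.mono (hcore.trans (hsub 0))).ncard_image,
      ncard_blockwise s fun i hi => ((finite_Iio _).prod (finite_Iio _)).subset
        ((iInter_subset _ 0).trans (hbox i hi 0))]
    exact Finset.sum_congr rfl fun i hi => (hstab i hi).ncard_iInter
  · unfold assemble
    rw [← (hinj.mono (iUnion_subset hsub)).image_iInter_eq, iInter_blockwise]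
  · intro α β hαβ
    unfold assemble
    rw [← hinj.image_inter (hsub α) (hsub β), blockwise_inter,
      blockwise_congr s fun i hi => (hstab i hi).inter_eq_iInter hαβ]

end DiagonalBlock

lemma injOn_natCast_add {ι : Type*} [LinearOrder ι] {n w : ℕ} {c : ι → ℕ} {D : Set (ι × ℕ)}
    (hsep : ∀ x ∈ D, ∀ y ∈ D, x.1 < y.1 → c x.1 + x.2 ≠ c y.1 + y.2)
    (hw : ∀ x ∈ D, w ≤ c x.1 + x.2 ∧ c x.1 + x.2 < w + n) :
    InjOn (fun x => ((c x.1 + x.2 : ℕ) : ZMod n)) D := by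
  intro x hx y hy h
  have hx' := hw x hx
  have hy' := hw y hy
  have heq : c x.1 + x.2 = c y.1 + y.2 :=
    ((ZMod.natCast_eq_natCast_iff _ _ _).1 h).eq_of_abs_lt (by rw [abs_sub_lt_iff]; omega)
  rcases lt_trichotomy x.1 y.1 with hxy | hxy | hxy
  · exact absurd heq (hsep x hx y hy hxy)
  · exact Prod.ext hxy (by rw [hxy] at heq; omega)
  · exact absurd heq.symm (hsep y hy x hx hxy)

section Principal

variable {μ : ℕ} (b d I : ℕ)

/-- The base blocks are indexed by the symbol range `k ∈ [1, 2I]` they use; along the diagonal the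
even `k` occupy positions `1, …, I` (before the small block) and the odd `k` positions
`I + 1, …, 2I` (after it), which makes `2 * baseOffset k ≡ b k + 2d (mod n)`. -/
def basePosition (k : ℕ) : ℕ := if k % 2 = 0 then k / 2 else I + (k + 1) / 2

def baseOffset (k : ℕ) : ℕ := b * basePosition I k + if k % 2 = 0 then d else 2 * d

def largeBlock (P : Fin μ → Set (ℕ × ℕ)) : DiagonalBlock μ where
  offset := 0
  size := b + d
  symbols := Icc ((b - 1) / 2) ((b - 1) / 2 + (b - 1) + 2 * d) \ {s | ∃ j, j < d ∧ s = b + 2 * j}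
  cells := P

def baseBlock (k : ℕ) (P : Fin μ → Set (ℕ × ℕ)) : DiagonalBlock μ where
  offset := baseOffset b d I k
  size := b
  symbols := Icc ((b - 1) / 2) ((b - 1) / 2 + (b - 1))
  cells := P

def smallBlock : DiagonalBlock μ where
  offset := b * I + b + d
  size := d
  symbols := (fun r => r + r) '' Iio d
  cells := fun _ => (fun r => (r, r)) '' Iio d

def principalBlock (P0 : Fin μ → Set (ℕ × ℕ)) (Pb : ℕ → Fin μ → Set (ℕ × ℕ)) (k : ℕ) :
    DiagonalBlock μ :=
  if k = 0 then largeBlock b d P0 else if k ≤ 2 * I then baseBlock b d I k (Pb k)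
  else smallBlock b d I

/-- `principalShift k ≡ 2 * offset (mod n)` for block `k`, chosen so that the symbols
`principalShift k + s`, `s ∈ symbols`, of all blocks lie in `[(b - 1) / 2, (b - 1) / 2 + n)`. -/
def principalShift (k : ℕ) : ℕ := if k = 0 then 0 else if k ≤ 2 * I then b * k + 2 * d else b

lemma principalBlock_cases (P0 : Fin μ → Set (ℕ × ℕ)) (Pb : ℕ → Fin μ → Set (ℕ × ℕ)) {k : ℕ}
    (hk : k < 2 * I + 2) :
    (k = 0 ∧ principalBlock b d I P0 Pb k = largeBlock b d P0 ∧ principalShift b d I k = 0) ∨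
    (1 ≤ k ∧ k ≤ 2 * I ∧ principalBlock b d I P0 Pb k = baseBlock b d I k (Pb k) ∧
      principalShift b d I k = b * k + 2 * d) ∨
    (k = 2 * I + 1 ∧ principalBlock b d I P0 Pb k = smallBlock b d I ∧
      principalShift b d I k = b) := by
  unfold principalBlock principalShift
  split_ifs with h0 h1
  · exact Or.inl ⟨h0, rfl, rfl⟩
  · exact Or.inr (Or.inl ⟨by omega, h1, rfl, rfl⟩)
  · exact Or.inr (Or.inr ⟨by omega, rfl, rfl⟩)

variable {b d I}

lemma basePosition_bounds {k : ℕ} (hk : 1 ≤ k) (hk' : k ≤ 2 * I) :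
    1 ≤ basePosition I k ∧ basePosition I k ≤ 2 * I ∧ (basePosition I k ≤ I ↔ k % 2 = 0) := by
  unfold basePosition
  split_ifs <;> omega

lemma basePosition_ne {k k' : ℕ} (hk : 1 ≤ k) (hkk' : k < k') (hk' : k' ≤ 2 * I) :
    basePosition I k ≠ basePosition I k' := by
  unfold basePosition
  split_ifs <;> omega

lemma mul_add_le_mul_of_lt (b : ℕ) {p q : ℕ} (h : p < q) : b * p + b ≤ b * q := by
  simpa [mul_add_one] using Nat.mul_le_mul_left b h

lemma baseOffset_bounds {k : ℕ} (hk : 1 ≤ k) (hk' : k ≤ 2 * I) :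
    b + d ≤ baseOffset b d I k ∧
    (k % 2 = 0 → baseOffset b d I k + b ≤ b * I + b + d) ∧
    (k % 2 = 1 → b * I + b + 2 * d ≤ baseOffset b d I k ∧
      baseOffset b d I k + b ≤ 2 * (b * I) + b + 2 * d) := by
  obtain ⟨h1, h2, h3⟩ := basePosition_bounds (I := I) hk hk'
  have e1 : b ≤ b * basePosition I k := by simpa using Nat.mul_le_mul_left b h1
  have e2 : b * basePosition I k ≤ 2 * (b * I) := by
    simpa [mul_left_comm] using Nat.mul_le_mul_left b h2
  unfold baseOffset
  refine ⟨by split_ifs <;> omega, fun he => ?_, fun ho => ?_⟩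
  · have := Nat.mul_le_mul_left b (h3.2 he)
    rw [if_pos he]
    omega
  · have := mul_add_le_mul_of_lt b (show I < basePosition I k by omega)
    rw [if_neg (by omega)]
    omega

lemma baseOffset_add_le {k k' : ℕ} (hk : 1 ≤ k) (hk' : k ≤ 2 * I) (hl : 1 ≤ k') (hl' : k' ≤ 2 * I)
    (h : basePosition I k < basePosition I k') : baseOffset b d I k + b ≤ baseOffset b d I k' := by
  have := mul_add_le_mul_of_lt b h
  have := (basePosition_bounds (I := I) hk hk').2.2
  have := (basePosition_bounds (I := I) hl hl').2.2
  unfold baseOffset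
  split_ifs <;> omega

lemma natCast_two_mul_baseOffset {n : ℕ} (hn : n = 2 * b * I + b + 2 * d) (k x : ℕ) :
    ((2 * baseOffset b d I k + x : ℕ) : ZMod n) = ((b * k + 2 * d + x : ℕ) : ZMod n) := by
  obtain ⟨j, rfl | rfl⟩ := Nat.even_or_odd' k
  · simp only [baseOffset, basePosition, Nat.mul_mod_right, if_true,
      Nat.mul_div_cancel_left j two_pos]
    congr 1
    ring
  · have hpos : basePosition I (2 * j + 1) = I + (j + 1) := by
      simp only [basePosition]
      split_ifs <;> omega
    have hodd : (2 * j + 1) % 2 ≠ 0 := by omega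
    rw [show 2 * baseOffset b d I (2 * j + 1) + x = n + (b * (2 * j + 1) + 2 * d + x) by
      simp only [baseOffset, hpos, if_neg hodd]
      subst hn
      ring, Nat.cast_add, ZMod.natCast_self, zero_add]

variable {n : ℕ} (P0 : Fin μ → Set (ℕ × ℕ)) (Pb : ℕ → Fin μ → Set (ℕ × ℕ))

lemma disjointRows_principalBlock (hn : n = 2 * b * I + b + 2 * d) :
    DiagonalBlock.DisjointRows n (Finset.range (2 * I + 2)) (principalBlock b d I P0 Pb) := by
  have hn' : n = 2 * (b * I) + b + 2 * d := by rw [hn, mul_assoc]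
  refine injOn_natCast_add (c := fun i => (principalBlock b d I P0 Pb i).offset) (w := 0) ?_ ?_
  · rintro ⟨i, x⟩ ⟨hi, hx⟩ ⟨j, y⟩ ⟨hj, hy⟩ (hij : i < j)
    simp only [Finset.mem_range, mem_Iio] at hi hj hx hy ⊢
    rcases principalBlock_cases b d I P0 Pb hi with
      ⟨rfl, hB, -⟩ | ⟨hi1, hi2, hB, -⟩ | ⟨rfl, hB, -⟩ <;>
    rcases principalBlock_cases b d I P0 Pb hj with
      ⟨rfl, hB', -⟩ | ⟨hj1, hj2, hB', -⟩ | ⟨rfl, hB', -⟩ <;>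
    simp only [hB, hB', largeBlock, baseBlock, smallBlock] at hx hy ⊢ <;> try omega
    -- left: large/base, base/base and base/small
    · have := (baseOffset_bounds (b := b) (d := d) hj1 hj2).1
      omega
    · rcases (basePosition_ne hi1 hij hj2).lt_or_gt with h | h
      · have := baseOffset_add_le (b := b) (d := d) hi1 hi2 hj1 hj2 h
        omega
      · have := baseOffset_add_le (b := b) (d := d) hj1 hj2 hi1 hi2 h
        omega
    · have := baseOffset_bounds (b := b) (d := d) hi1 hi2
      omega
  · rintro ⟨i, x⟩ ⟨hi, hx⟩
    simp only [Finset.mem_range, mem_Iio] at hi hx ⊢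
    rcases principalBlock_cases b d I P0 Pb hi with
      ⟨rfl, hB, -⟩ | ⟨hi1, hi2, hB, -⟩ | ⟨rfl, hB, -⟩ <;>
    simp only [hB, largeBlock, baseBlock, smallBlock] at hx ⊢
    · omega
    · have := baseOffset_bounds (b := b) (d := d) hi1 hi2
      omega
    · omega

lemma disjointSymbols_principalBlock (hb : 1 ≤ b) (hn : n = 2 * b * I + b + 2 * d) :
    DiagonalBlock.DisjointSymbols n (Finset.range (2 * I + 2)) (principalBlock b d I P0 Pb) := by
  have hn' : n = 2 * (b * I) + b + 2 * d := by rw [hn, mul_assoc]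
  refine (injOn_natCast_add (c := principalShift b d I) (w := (b - 1) / 2) ?_ ?_).congr ?_
  · rintro ⟨i, x⟩ ⟨hi, hx⟩ ⟨j, y⟩ ⟨hj, hy⟩ (hij : i < j)
    simp only [Finset.mem_range] at hi hj
    rcases principalBlock_cases b d I P0 Pb hi with
      ⟨rfl, hB, hS⟩ | ⟨hi1, hi2, hB, hS⟩ | ⟨rfl, hB, hS⟩ <;>
    rcases principalBlock_cases b d I P0 Pb hj with
      ⟨rfl, hB', hS'⟩ | ⟨hj1, hj2, hB', hS'⟩ | ⟨rfl, hB', hS'⟩ <;>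
    simp only [hB, hB', hS, hS', largeBlock, baseBlock, smallBlock, mem_sdiff, mem_Icc,
      mem_image, mem_Iio] at hx hy ⊢ <;> try omega
    -- left: large/base, large/small, base/base and base/small
    · have := Nat.le_mul_of_pos_right b hj1
      omega
    · obtain ⟨r, hr, rfl⟩ := hy
      exact fun h => hx.2 ⟨r, hr, by omega⟩
    · have := mul_add_le_mul_of_lt b hij
      omega
    · obtain ⟨r, hr, rfl⟩ := hy
      have := Nat.le_mul_of_pos_right b hi1
      omega
  · rintro ⟨i, x⟩ ⟨hi, hx⟩
    simp only [Finset.mem_range] at hi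
    rcases principalBlock_cases b d I P0 Pb hi with
      ⟨rfl, hB, hS⟩ | ⟨hi1, hi2, hB, hS⟩ | ⟨rfl, hB, hS⟩ <;>
    simp only [hB, hS, largeBlock, baseBlock, smallBlock, mem_sdiff, mem_Icc, mem_image,
      mem_Iio] at hx ⊢
    · omega
    · have : b * i ≤ 2 * (b * I) := by simpa [mul_left_comm] using Nat.mul_le_mul_left b hi2
      omega
    · obtain ⟨r, hr, rfl⟩ := hx
      omega
  · rintro ⟨i, x⟩ ⟨hi, -⟩
    simp only [Finset.mem_range] at hi
    rcases principalBlock_cases b d I P0 Pb hi with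
      ⟨rfl, hB, hS⟩ | ⟨hi1, hi2, hB, hS⟩ | ⟨rfl, hB, hS⟩ <;>
    simp only [hB, hS, largeBlock, baseBlock, smallBlock]
    · exact (natCast_two_mul_baseOffset hn i x).symm
    · rw [show 2 * (b * I + b + d) + x = n + (b + x) by omega, Nat.cast_add (m := n),
        ZMod.natCast_self, zero_add]

lemma sum_size_principalBlock (hn : n = 2 * b * I + b + 2 * d) :
    ∑ k ∈ Finset.range (2 * I + 2), (principalBlock b d I P0 Pb k).size = n := by
  have hbase : ∀ k ∈ Finset.range (2 * I), (principalBlock b d I P0 Pb (k + 1)).size = b := by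
    intro k hk
    rw [Finset.mem_range] at hk
    rcases principalBlock_cases b d I P0 Pb (k := k + 1) (by omega) with
      ⟨h, -⟩ | ⟨-, -, hB, -⟩ | ⟨h, -⟩
    · omega
    · rw [hB]
      rfl
    · omega
  have hlast : principalBlock b d I P0 Pb (2 * I + 1) = smallBlock b d I := by
    simp [principalBlock]
  rw [Finset.sum_range_succ, Finset.sum_range_succ', Finset.sum_congr rfl hbase, hlast]
  simp only [Finset.sum_const, Finset.card_range, smul_eq_mul, principalBlock, if_pos,
    largeBlock, smallBlock]
  rw [hn]
  ring

lemma isPartialTransversalIn_principalBlock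
    (hP0 : ∀ α, IsPartialTransversalIn (b + d)
      (Icc ((b - 1) / 2) ((b - 1) / 2 + (b - 1) + 2 * d) \ {s | ∃ j, j < d ∧ s = b + 2 * j})
      (P0 α))
    (hPb : ∀ k, 1 ≤ k → k ≤ 2 * I → ∀ α,
      IsPartialTransversalIn b (Icc ((b - 1) / 2) ((b - 1) / 2 + (b - 1))) (Pb k α))
    {k : ℕ} (hk : k < 2 * I + 2) (α : Fin μ) :
    IsPartialTransversalIn (principalBlock b d I P0 Pb k).size
      (principalBlock b d I P0 Pb k).symbols ((principalBlock b d I P0 Pb k).cells α) := by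
  rcases principalBlock_cases b d I P0 Pb hk with
    ⟨rfl, hB, -⟩ | ⟨hk1, hk2, hB, -⟩ | ⟨rfl, hB, -⟩ <;> rw [hB]
  · exact hP0 α
  · exact hPb k hk1 hk2 α
  · exact isPartialTransversalIn_diagonal d

lemma stablyIntersectP_principalBlock [NeZero μ] {t : ℕ → ℕ} (hP0 : StablyIntersectP μ P0 (t 0))
    (hPb : ∀ k, 1 ≤ k → k ≤ 2 * I → StablyIntersectP μ (Pb k) (t k)) {k : ℕ}
    (hk : k < 2 * I + 2) :
    StablyIntersectP μ (principalBlock b d I P0 Pb k).cells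
      (Function.update t (2 * I + 1) d k) := by
  rcases principalBlock_cases b d I P0 Pb hk with
    ⟨rfl, hB, -⟩ | ⟨hk1, hk2, hB, -⟩ | ⟨rfl, hB, -⟩ <;> rw [hB]
  · rw [Function.update_of_ne (by omega)]
    exact hP0
  · rw [Function.update_of_ne (by omega)]
    exact hPb k hk1 hk2
  · have := StablyIntersectP.const (μ := μ) ((fun r => (r, r)) '' Iio d)
    rw [(isPartialTransversalIn_diagonal d).ncard_eq] at this
    rwa [Function.update_self]

end Principal

lemma sum_range_update_last (t : ℕ → ℕ) (N d : ℕ) :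
    ∑ k ∈ Finset.range (N + 1), Function.update t N d k = ∑ k ∈ Finset.range N, t k + d := by
  rw [Finset.sum_range_succ, Function.update_self]
  congr 1
  exact Finset.sum_congr rfl fun k hk => Function.update_of_ne (Finset.mem_range.1 hk).ne _ _

theorem principal_construction_general (n b d I μ : ℕ) (t : ℕ → ℕ)
    (hb3 : 3 ≤ b) (hμ : 2 ≤ μ)
    (hsize : n = 2 * b * I + b + 2 * d)
    (hbase : ∀ i, 1 ≤ i → i ≤ 2 * I →
      ∃ P : Fin μ → Set (ℕ × ℕ),
        (∀ α, IsPartialTransversalIn b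
          (Set.Icc ((b - 1) / 2) ((b - 1) / 2 + (b - 1))) (P α)) ∧
        StablyIntersectP μ P (t i))
    (hlarge : ∃ P : Fin μ → Set (ℕ × ℕ),
        (∀ α, IsPartialTransversalIn (b + d)
          (Set.Icc ((b - 1) / 2) ((b - 1) / 2 + (b - 1) + 2 * d) \
            {s : ℕ | ∃ j, j < d ∧ s = b + 2 * j}) (P α)) ∧
        StablyIntersectP μ P (t 0)) :
    ∃ T : Fin μ → Set (ZMod n × ZMod n × ZMod n),
      (∀ α, IsTransversal n (T α)) ∧
      StablyIntersect n μ T (d + ∑ i ∈ Finset.range (2 * I + 1), t i) := by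
  have : NeZero n := ⟨by omega⟩
  have : NeZero μ := ⟨by omega⟩
  obtain ⟨P0, hP0, hP0s⟩ := hlarge
  choose! Pb hPb hPbs using hbase
  set s := Finset.range (2 * I + 2)
  set B := principalBlock b d I P0 Pb
  have hP : ∀ k ∈ s, ∀ α, IsPartialTransversalIn (B k).size (B k).symbols ((B k).cells α) :=
    fun k hk => isPartialTransversalIn_principalBlock P0 Pb hP0 hPb (Finset.mem_range.1 hk)
  have hrows : DiagonalBlock.DisjointRows n s B := disjointRows_principalBlock P0 Pb hsize
  refine ⟨DiagonalBlock.assemble n s B, fun α => ?_, ?_⟩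
  · exact DiagonalBlock.isTransversal_assemble hrows
      (disjointSymbols_principalBlock P0 Pb (by omega) hsize) (sum_size_principalBlock P0 Pb hsize)
      α fun k hk => hP k hk α
  · rw [add_comm d, ← sum_range_update_last]
    exact DiagonalBlock.stablyIntersect_assemble hrows (fun k hk α => (hP k hk α).subset_box)
      fun k hk => stablyIntersectP_principalBlock P0 Pb hP0s hPbs (Finset.mem_range.1 hk)

theorem principal_construction (n b d I μ : ℕ) (t : ℕ → ℕ)
    (hn : Odd n) (hb : Odd b) (hb3 : 3 ≤ b) (hbn : 3 * b ≤ n)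
    (hI : 1 ≤ I) (hd : d ≤ b - 1) (hμ : 2 ≤ μ)
    (hsize : n = 2 * b * I + b + 2 * d)
    (hbase : ∀ i, 1 ≤ i → i ≤ 2 * I →
      ∃ P : Fin μ → Set (ℕ × ℕ),
        (∀ α, IsPartialTransversalIn b
          (Set.Icc ((b - 1) / 2) ((b - 1) / 2 + (b - 1))) (P α)) ∧
        StablyIntersectP μ P (t i))
    (hlarge : ∃ P : Fin μ → Set (ℕ × ℕ),
        (∀ α, IsPartialTransversalIn (b + d)
          (Set.Icc ((b - 1) / 2) ((b - 1) / 2 + (b - 1) + 2 * d) \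
            {s : ℕ | ∃ j, j < d ∧ s = b + 2 * j}) (P α)) ∧
        StablyIntersectP μ P (t 0)) :
    ∃ T : Fin μ → Set (ZMod n × ZMod n × ZMod n),
      (∀ α, IsTransversal n (T α)) ∧
      StablyIntersect n μ T (d + ∑ i ∈ Finset.range (2 * I + 1), t i) :=
  principal_construction_general n b d I μ t hb3 hμ hsize hbase hlarge
end
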